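/- arXiv:1501.07544 — 3 statements merged into one kernel-verified Lean document; each statement's English description precedes it below -/
import Mathlib

section
/- Let B ⊆ ℝ^n be an m-dimensional subspace and X ⊆ [n] with dim(S_{X^c} ∩ B) = 0. Define I = {I ⊆ X : dim(S_{I ∪ X^c} ∩ B) = 0}. Then (X, I) is a matroid. -/
/-!
Put `W = B + S_{Xᶜ}`. Since `S_{I ∪ Xᶜ} = S_I + S_{Xᶜ}`, modularity of the lattice of subspaces
together with `S_{Xᶜ} ∩ B = 0` shows that `S_{I ∪ Xᶜ} ∩ B = 0` with `I ⊆ X` holds iff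
`S_I ∩ W = 0`, i.e. iff the images of the standard basis vectors `eᵢ`, `i ∈ I`, in `ℝⁿ ⧸ W` are
linearly independent (for `i ∉ X` the image of `eᵢ` is zero). So `I` is the collection of
independent subfamilies of a family of vectors, and the exchange property is the usual
dimension count.
-/

open Finset MeasureTheory

/-- The sparse subspace `S_J ⊆ ℝ^n`: vectors vanishing outside `J`. -/
def sparseSubspace (n : ℕ) (J : Finset (Fin n)) : Submodule ℝ (Fin n → ℝ) where
  carrier := {v | ∀ i, i ∉ J → v i = 0}
  add_mem' := by intro a b ha hb i hi; simp [ha i hi, hb i hi]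
  zero_mem' := by intro i _; rfl
  smul_mem' := by intro c v hv i hi; simp [hv i hi]

/-- Independence predicate of the matroid `M = (X, {I ⊆ X : dim(S_{I ∪ Xᶜ} ∩ B) = 0})`. -/
def matroidIndep {n : ℕ} (B : Submodule ℝ (Fin n → ℝ)) (X I : Finset (Fin n)) : Prop :=
  I ⊆ X ∧ Module.finrank ℝ ↥(sparseSubspace n (I ∪ Xᶜ) ⊓ B) = 0

theorem LinearIndepOn.exists_insert_of_card_lt {K V ι : Type*} [DivisionRing K] [AddCommGroup V]
    [Module K V] [DecidableEq ι] {v : ι → V} {I J : Finset ι} (hI : LinearIndepOn K v I)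
    (hJ : LinearIndepOn K v J) (hlt : #I < #J) :
    ∃ b ∈ J \ I, LinearIndepOn K v ↑(insert b I) := by
  by_contra! h
  have hJI : v '' J ⊆ Submodule.span K (v '' I) := by
    rintro _ ⟨b, hb, rfl⟩
    by_contra hbI
    obtain ⟨hins, hnot⟩ := hI.notMem_span_iff.mp hbI
    exact h b (mem_sdiff.2 ⟨hb, hnot⟩) (by simpa using hins)
  have : FiniteDimensional K (Submodule.span K (v '' I)) :=
    FiniteDimensional.span_of_finite K (I.finite_toSet.image v)
  have hcard : #J ≤ #I := calc
    #J = Module.finrank K (Submodule.span K (v '' J)) := by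
      rw [Set.image_eq_range, finrank_span_eq_card hJ]; simp
    _ ≤ Module.finrank K (Submodule.span K (v '' I)) :=
      Submodule.finrank_mono (Submodule.span_le.2 hJI)
    _ ≤ #I := by
      rw [Set.image_eq_range]
      exact (finrank_range_le_card _).trans_eq (by simp)
  exact hlt.not_ge hcard

theorem Module.Basis.linearIndepOn_mkQ_comp_iff {R M ι : Type*} [Ring R] [AddCommGroup M]
    [Module R M] (b : Module.Basis ι R M) (W : Submodule R M) (s : Set ι) :
    LinearIndepOn R (W.mkQ ∘ b) s ↔ Disjoint (Submodule.span R (b '' s)) W := by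
  rw [Set.image_eq_range]
  constructor
  · intro h
    simpa using Submodule.range_ker_disjoint (f := W.mkQ) h
  · intro h
    exact (b.linearIndependent.comp _ Subtype.val_injective).map (by rwa [W.ker_mkQ])

theorem mem_sparseSubspace {n : ℕ} {J : Finset (Fin n)} {v : Fin n → ℝ} :
    v ∈ sparseSubspace n J ↔ ∀ i ∉ J, v i = 0 :=
  Iff.rfl

theorem sparseSubspace_eq_span (n : ℕ) (J : Finset (Fin n)) :
    sparseSubspace n J = Submodule.span ℝ (Pi.basisFun ℝ (Fin n) '' J) := by
  ext v
  rw [← Pi.spanSubset, Pi.mem_spanSubset_iff, mem_sparseSubspace]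
  simp

theorem sparseSubspace_union (n : ℕ) (J K : Finset (Fin n)) :
    sparseSubspace n (J ∪ K) = sparseSubspace n J ⊔ sparseSubspace n K := by
  simp only [sparseSubspace_eq_span, coe_union, Set.image_union, Submodule.span_union]

theorem single_mem_sparseSubspace {n : ℕ} {J : Finset (Fin n)} {i : Fin n} (hi : i ∈ J) :
    Pi.single i 1 ∈ sparseSubspace n J :=
  fun _ hj => Pi.single_eq_of_ne (ne_of_mem_of_not_mem hi hj).symm _

theorem disjoint_sparseSubspace {n : ℕ} {J K : Finset (Fin n)} (h : Disjoint J K) :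
    Disjoint (sparseSubspace n J) (sparseSubspace n K) := by
  rw [Submodule.disjoint_def]
  intro v hJ hK
  funext i
  by_cases hi : i ∈ J
  · exact hK i (disjoint_left.1 h hi)
  · exact hJ i hi

theorem matroidIndep_iff_linearIndepOn {n : ℕ} {B : Submodule ℝ (Fin n → ℝ)} {X : Finset (Fin n)}
    (hX : Disjoint (sparseSubspace n Xᶜ) B) (I : Finset (Fin n)) :
    matroidIndep B X I ↔
      LinearIndepOn ℝ ((B ⊔ sparseSubspace n Xᶜ).mkQ ∘ Pi.basisFun ℝ (Fin n)) I := by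
  rw [matroidIndep, Submodule.finrank_eq_zero, ← disjoint_iff,
    Module.Basis.linearIndepOn_mkQ_comp_iff, ← sparseSubspace_eq_span, sparseSubspace_union]
  constructor
  · rintro ⟨hIX, hdisj⟩
    have hIXc := disjoint_sparseSubspace (n := n) (disjoint_compl_right_iff.2 hIX)
    rw [sup_comm]
    exact hIXc.disjoint_sup_right_of_disjoint_sup_left hdisj
  · intro hdisj
    refine ⟨fun i hi => ?_, ?_⟩
    · by_contra hiX
      have hsingle := Submodule.disjoint_def.1 hdisj _ (single_mem_sparseSubspace hi)
        (Submodule.mem_sup_right (single_mem_sparseSubspace (mem_compl.2 hiX)))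
      simp at hsingle
    · rw [sup_comm] at hdisj
      exact hX.disjoint_sup_left_of_disjoint_sup_right hdisj

theorem stmt2_general {n : ℕ} (B : Submodule ℝ (Fin n → ℝ))
    (X : Finset (Fin n))
    (hX : Module.finrank ℝ ↥(sparseSubspace n Xᶜ ⊓ B) = 0) :
    matroidIndep B X ∅ ∧
    (∀ I J : Finset (Fin n), I ⊆ J → matroidIndep B X J → matroidIndep B X I) ∧
    (∀ I J : Finset (Fin n), matroidIndep B X I → matroidIndep B X J → I.card < J.card →
      ∃ b ∈ J \ I, matroidIndep B X (insert b I)) := by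
  have hdisj : Disjoint (sparseSubspace n Xᶜ) B :=
    disjoint_iff.2 (Submodule.finrank_eq_zero.1 hX)
  simp only [matroidIndep_iff_linearIndepOn hdisj]
  exact ⟨by simp, fun I J hIJ hJ => hJ.mono (coe_subset.2 hIJ),
    fun I J hI hJ hlt => hI.exists_insert_of_card_lt hJ hlt⟩

theorem stmt2 {n m : ℕ} (B : Submodule ℝ (Fin n → ℝ)) (hB : Module.finrank ℝ B = m)
    (X : Finset (Fin n))
    (hX : Module.finrank ℝ ↥(sparseSubspace n Xᶜ ⊓ B) = 0) :
    matroidIndep B X ∅ ∧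
    (∀ I J : Finset (Fin n), I ⊆ J → matroidIndep B X J → matroidIndep B X I) ∧
    (∀ I J : Finset (Fin n), matroidIndep B X I → matroidIndep B X J → I.card < J.card →
      ∃ b ∈ J \ I, matroidIndep B X (insert b I)) :=
  stmt2_general B X hX
end

section
/- Let B ⊆ ℝ^n be a subspace and X ⊆ [n] with dim(S_{X^c} ∩ B) = 0. The rank function of the matroid M = (X, {I ⊆ X : dim(S_{I ∪ X^c} ∩ B) = 0}) is given by r(J) = |J| − dim(S_{J ∪ X^c} ∩ B) for all J ⊆ X. -/
/-
The proof is a rank-nullity count for `d(A) = dim(S_A ∩ B)`. Restricting to the coordinates in `C`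
has kernel `S_A ∩ B` on `S_{A ∪ C} ∩ B`, so `d(A ∪ C) ≤ d(A) + |C|`; for an independent `I ⊆ J`
this gives `d(J ∪ Xᶜ) ≤ |J| - |I|`. Conversely, while `d(J ∪ Xᶜ) > 0` a nonzero vector of
`S_{J ∪ Xᶜ} ∩ B` has, because `S_{Xᶜ} ∩ B = 0`, a nonzero coordinate `x ∈ J`; removing `x` from `J`
lowers `d` by exactly one, and repeating this reaches an independent set of size `|J| - d(J ∪ Xᶜ)`.
-/

open Finset MeasureTheory

namespace sparseSubspace

variable {n : ℕ}

theorem mem_iff {A : Finset (Fin n)} {v : Fin n → ℝ} :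
    v ∈ sparseSubspace n A ↔ ∀ i, i ∉ A → v i = 0 :=
  Iff.rfl

theorem mono {A A' : Finset (Fin n)} (h : A ⊆ A') : sparseSubspace n A ≤ sparseSubspace n A' :=
  fun _ hv i hi => hv i (fun hiA => hi (h hiA))

noncomputable def finrankInf (B : Submodule ℝ (Fin n → ℝ)) (A : Finset (Fin n)) : ℕ :=
  Module.finrank ℝ ↥(sparseSubspace n A ⊓ B)

variable (B : Submodule ℝ (Fin n → ℝ))

theorem finrankInf_union_le (A C : Finset (Fin n)) :
    finrankInf B (A ∪ C) ≤ finrankInf B A + C.card := by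
  set W := sparseSubspace n (A ∪ C) ⊓ B
  let restrictC : W →ₗ[ℝ] (C → ℝ) := (LinearMap.funLeft ℝ ℝ Subtype.val).comp W.subtype
  have hrange : Module.finrank ℝ (LinearMap.range restrictC) ≤ C.card := by
    simpa using Submodule.finrank_le (LinearMap.range restrictC)
  have hker : (LinearMap.ker restrictC).map W.subtype ≤ sparseSubspace n A ⊓ B := by
    rintro _ ⟨w, hw, rfl⟩
    refine ⟨fun i hiA => ?_, w.2.2⟩
    by_cases hiC : i ∈ C
    · exact congrFun hw ⟨i, hiC⟩
    · exact w.2.1 i (by simp [hiA, hiC])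
  have hker_le : Module.finrank ℝ (LinearMap.ker restrictC) ≤ finrankInf B A := by
    rw [← Submodule.finrank_map_subtype_eq]
    exact Submodule.finrank_mono hker
  have := restrictC.finrank_range_add_finrank_ker
  change Module.finrank ℝ W ≤ _
  omega

theorem finrankInf_erase_add_one {A : Finset (Fin n)} {v : Fin n → ℝ}
    (hv : v ∈ sparseSubspace n A ⊓ B) {x : Fin n} (hvx : v x ≠ 0) :
    finrankInf B (A.erase x) + 1 = finrankInf B A := by
  have hxA : x ∈ A := not_not.1 fun hxA => hvx (hv.1 x hxA)
  have hlt : sparseSubspace n (A.erase x) ⊓ B < sparseSubspace n A ⊓ B := by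
    refine lt_of_le_of_ne (inf_le_inf_right B (mono (erase_subset x A))) fun heq => ?_
    rw [← heq] at hv
    exact hvx (hv.1 x (notMem_erase x A))
  have hle := finrankInf_union_le B (A.erase x) {x}
  rw [erase_union_of_mem (mem_singleton_self x), union_eq_left.2 (singleton_subset_iff.2 hxA),
    card_singleton] at hle
  have := Submodule.finrank_lt_finrank_of_lt hlt
  unfold finrankInf at *
  omega

end sparseSubspace

open sparseSubspace

variable {n : ℕ} (B : Submodule ℝ (Fin n → ℝ)) {X : Finset (Fin n)}

theorem card_le_card_sub_finrankInf_of_matroidIndep {I J : Finset (Fin n)} (hIJ : I ⊆ J)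
    (hI : matroidIndep B X I) : I.card ≤ J.card - finrankInf B (J ∪ Xᶜ) := by
  have hsplit : J ∪ Xᶜ = (I ∪ Xᶜ) ∪ (J \ I) := by
    ext i
    grind
  have hle := finrankInf_union_le B (I ∪ Xᶜ) (J \ I)
  rw [← hsplit, card_sdiff_of_subset hIJ] at hle
  have hI0 : finrankInf B (I ∪ Xᶜ) = 0 := hI.2
  have := card_le_card hIJ
  omega

theorem exists_coord_ne_zero_mem_of_finrankInf_ne_zero
    (hX : sparseSubspace n Xᶜ ⊓ B = ⊥) {J : Finset (Fin n)} (hJ : finrankInf B (J ∪ Xᶜ) ≠ 0) :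
    ∃ v ∈ sparseSubspace n (J ∪ Xᶜ) ⊓ B, ∃ x ∈ J, x ∈ X ∧ v x ≠ 0 := by
  obtain ⟨v, hv, hv0⟩ :=
    Submodule.exists_mem_ne_zero_of_ne_bot (p := sparseSubspace n (J ∪ Xᶜ) ⊓ B)
      fun hbot => hJ (by rw [finrankInf, hbot, finrank_bot])
  have hvX : v ∉ sparseSubspace n Xᶜ := by
    intro hvX
    have hvXB : v ∈ sparseSubspace n Xᶜ ⊓ B := ⟨hvX, hv.2⟩
    rw [hX] at hvXB
    exact hv0 ((Submodule.mem_bot ℝ).1 hvXB)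
  simp only [mem_iff, not_forall, mem_compl, not_not] at hvX
  obtain ⟨x, hxX, hvx⟩ := hvX
  have hxJ : x ∈ J := by
    by_contra hxJ
    exact hvx (hv.1 x (by simp [hxJ, hxX]))
  exact ⟨v, hv, x, hxJ, hxX, hvx⟩

theorem exists_matroidIndep_card_add_finrankInf (hX : sparseSubspace n Xᶜ ⊓ B = ⊥)
    {J : Finset (Fin n)} (hJ : J ⊆ X) :
    ∃ I ⊆ J, matroidIndep B X I ∧ I.card + finrankInf B (J ∪ Xᶜ) = J.card := by
  induction hd : finrankInf B (J ∪ Xᶜ) generalizing J with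
  | zero => exact ⟨J, Subset.rfl, ⟨hJ, hd⟩, rfl⟩
  | succ d ih =>
    obtain ⟨v, hv, x, hxJ, hxX, hvx⟩ :=
      exists_coord_ne_zero_mem_of_finrankInf_ne_zero B hX (J := J) (by omega)
    have herase : (J ∪ Xᶜ).erase x = J.erase x ∪ Xᶜ := by
      rw [erase_union_distrib, erase_eq_of_notMem (s := Xᶜ) (by simpa using hxX)]
    have hdrop := finrankInf_erase_add_one B hv hvx
    rw [herase] at hdrop
    obtain ⟨I, hIJ, hI, hcard⟩ := ih ((erase_subset x J).trans hJ) (by omega)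
    have := card_erase_add_one hxJ
    exact ⟨I, hIJ.trans (erase_subset x J), hI, by omega⟩

theorem stmt3 {n : ℕ} (B : Submodule ℝ (Fin n → ℝ)) (X : Finset (Fin n))
    (hX : Module.finrank ℝ ↥(sparseSubspace n Xᶜ ⊓ B) = 0)
    (J : Finset (Fin n)) (hJ : J ⊆ X) :
    IsGreatest {k : ℕ | ∃ I ⊆ J, matroidIndep B X I ∧ I.card = k}
      (J.card - Module.finrank ℝ ↥(sparseSubspace n (J ∪ Xᶜ) ⊓ B)) := by
  refine ⟨?_, ?_⟩
  · obtain ⟨I, hIJ, hI, hcard⟩ := exists_matroidIndep_card_add_finrankInf B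
      (Submodule.finrank_eq_zero.mp hX) hJ
    exact ⟨I, hIJ, hI, by rw [← hcard, finrankInf, Nat.add_sub_cancel]⟩
  · rintro k ⟨I, hIJ, hI, rfl⟩
    exact card_le_card_sub_finrankInf_of_matroidIndep B hIJ hI
end

section
/- (Matroid union theorem) Let M_1, ..., M_K be matroids on ground sets E_1, ..., E_K with rank functions r_1, ..., r_K. Then their union, with independent sets being all unions I_1 ∪ ... ∪ I_K where I_i is independent in M_i, is a matroid whose rank function satisfies r(U) = min over T ⊆ U of (|U \ T| + Σ_{i=1}^K r_i(T ∩ E_i)). -/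
/-!
Call `I` sparse for `f` when `#J ≤ f J` for every `J ⊆ I`. For `f` monotone, submodular and
vanishing at `∅` (Edmonds), sparse sets satisfy the exchange axiom and the largest sparse subset
of `U` has size `min_T (#(U \ T) + f T)`: if `I ⊆ U` is maximal sparse, then the largest tight
subset `D` of `I` (tight: `f D = #D`; tight sets are closed under union) spans every
`b ∈ U \ I`, so `T = D ∪ (U \ I)` attains the bound.

With `f T = ∑ i, r i (T ∩ E i)`, the union-independent sets are exactly the sparse ones. One
direction is counting. For the other (Rado), while some `x ∈ I` lies in two of the sets `E i`,
submodularity shows that `x` can be removed from one of them without losing sparsity; once the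
`E i` are disjoint on `I`, sparsity says that each `I ∩ E i` is independent.
-/

open Finset

/-- Independence in the union of `K` matroids: unions of one independent set from each. -/
def UnionIndep {α : Type*} [DecidableEq α] {K : ℕ}
    (Indep : Fin K → Finset α → Prop) (I : Finset α) : Prop :=
  ∃ f : Fin K → Finset α, (∀ i, Indep i (f i)) ∧ I = Finset.univ.biUnion f

section Submodular

variable {α : Type*}

def IsSparse (f : Finset α → ℕ) (I : Finset α) : Prop :=
  ∀ J ⊆ I, J.card ≤ f J

variable {f : Finset α → ℕ}

lemma isSparse_empty : IsSparse f ∅ := by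
  intro J hJ
  simp [subset_empty.mp hJ]

lemma IsSparse.mono {I J : Finset α} (hJ : IsSparse f J) (hIJ : I ⊆ J) : IsSparse f I :=
  fun K hK => hJ K (hK.trans hIJ)

variable [DecidableEq α]

def IsSubmodular (f : Finset α → ℕ) : Prop :=
  ∀ X Y, f (X ∪ Y) + f (X ∩ Y) ≤ f X + f Y

lemma IsSubmodular.add_le_add_of_subset (hmono : Monotone f) (hsub : IsSubmodular f)
    {P Q X Y : Finset α} (hP : P ⊆ X ∪ Y) (hQ : Q ⊆ X ∩ Y) : f P + f Q ≤ f X + f Y :=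
  (add_le_add (hmono hP) (hmono hQ)).trans (hsub X Y)

lemma IsSparse.card_le_card_sdiff_add (hmono : Monotone f) {I U : Finset α}
    (hI : IsSparse f I) (hIU : I ⊆ U) (T : Finset α) : I.card ≤ (U \ T).card + f T := by
  rw [← card_sdiff_add_card_inter I T]
  exact add_le_add (card_le_card (sdiff_subset_sdiff hIU Subset.rfl))
    ((hI _ inter_subset_left).trans (hmono inter_subset_right))

lemma IsSparse.le_card_union_of_le_card (hsub : IsSubmodular f) {I X Y : Finset α}
    (hI : IsSparse f I) (hX : X ⊆ I) (hXf : f X ≤ X.card) (hYf : f Y ≤ Y.card) :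
    f (X ∪ Y) ≤ (X ∪ Y).card := by
  have := hsub X Y
  have := hI (X ∩ Y) (inter_subset_left.trans hX)
  have := card_union_add_card_inter X Y
  omega

lemma IsSubmodular.apply_union_le (hsub : IsSubmodular f) (hmono : Monotone f) {D B : Finset α}
    (hB : ∀ b ∈ B, f (insert b D) ≤ f D) : f (D ∪ B) ≤ f D := by
  induction B using Finset.induction_on with
  | empty => simp
  | insert b B _ ih =>
    have hP : insert b (D ∪ B) ⊆ (D ∪ B) ∪ insert b D := by grind
    have hQ : D ⊆ (D ∪ B) ∩ insert b D := by grind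
    have := hsub.add_le_add_of_subset hmono hP hQ
    have := ih fun c hc => hB c (mem_insert_of_mem hc)
    have := hB b (mem_insert_self b B)
    rw [union_insert]
    omega

variable (hmono : Monotone f) (hsub : IsSubmodular f) (h0 : f ∅ = 0)
include hmono hsub h0

lemma IsSparse.exists_le_card_of_maximal {I U : Finset α} (hI : IsSparse f I) (hIU : I ⊆ U)
    (hmax : ∀ b ∈ U \ I, ¬ IsSparse f (insert b I)) :
    ∃ T ⊆ U, (U \ T).card + f T ≤ I.card := by
  obtain ⟨D, hD, hDmax⟩ := exists_max_image (I.powerset.filter fun J => f J ≤ J.card) card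
    ⟨∅, by simp [h0]⟩
  rw [mem_filter, mem_powerset] at hD
  have hsubD : ∀ J ⊆ I, f J ≤ J.card → J ⊆ D := by
    intro J hJI hJ
    have hle := hDmax (D ∪ J) (by
      rw [mem_filter, mem_powerset]
      exact ⟨union_subset hD.1 hJI, hI.le_card_union_of_le_card hsub hD.1 hD.2 hJ⟩)
    exact (eq_of_subset_of_card_le subset_union_left hle).symm ▸ subset_union_right
  have hspan : ∀ b ∈ U \ I, f (insert b D) ≤ f D := by
    intro b hb
    obtain ⟨J, hJ, hJf⟩ : ∃ J ⊆ insert b I, f J < J.card := by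
      simpa [IsSparse] using hmax b hb
    have hbJ : b ∈ J := by
      by_contra hbJ
      exact (hJf.trans_le (hI J fun y hy => (mem_insert.mp (hJ hy)).resolve_left
        (ne_of_mem_of_not_mem hy hbJ))).false
    have hJI : J.erase b ⊆ I := fun y hy => by grind
    have hcard := card_erase_add_one hbJ
    have htight : f (J.erase b) ≤ (J.erase b).card := by
      have := hmono (erase_subset b J)
      omega
    have hP : insert b D ⊆ D ∪ J := insert_subset (mem_union_right D hbJ) subset_union_left
    have hQ : J.erase b ⊆ D ∩ J := subset_inter (hsubD _ hJI htight) (erase_subset b J)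
    have := hsub.add_le_add_of_subset hmono hP hQ
    have := hI _ hJI
    have := hmono (erase_subset b J)
    omega
  refine ⟨D ∪ (U \ I), union_subset (hD.1.trans hIU) sdiff_subset, ?_⟩
  have hUT : U \ (D ∪ (U \ I)) ⊆ I \ D := by grind
  have := card_le_card hUT
  have := card_sdiff_add_card_eq_card hD.1
  have := hsub.apply_union_le hmono hspan
  omega

lemma IsSparse.exists_insert_of_card_lt {I J : Finset α} (hI : IsSparse f I) (hJ : IsSparse f J)
    (hIJ : I.card < J.card) : ∃ b ∈ J \ I, IsSparse f (insert b I) := by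
  by_contra! hno
  obtain ⟨T, -, hT⟩ := hI.exists_le_card_of_maximal hmono hsub h0 (subset_union_left (s₂ := J))
    fun b hb => hno b (by grind)
  have := hJ.card_le_card_sdiff_add hmono (subset_union_right (s₁ := I)) T
  omega

lemma isGreatest_card_isSparse (U : Finset α) :
    IsGreatest {k : ℕ | ∃ I ⊆ U, IsSparse f I ∧ I.card = k}
      (U.powerset.inf' (powerset_nonempty U) fun T => (U \ T).card + f T) := by
  classical
  have hbound : ∀ I ⊆ U, IsSparse f I →
      I.card ≤ U.powerset.inf' (powerset_nonempty U) fun T => (U \ T).card + f T :=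
    fun I hIU hI => le_inf' _ _ fun T _ => hI.card_le_card_sdiff_add hmono hIU T
  obtain ⟨I, hI, hImax⟩ := exists_max_image (U.powerset.filter (IsSparse f)) card
    ⟨∅, by simp [isSparse_empty]⟩
  rw [mem_filter, mem_powerset] at hI
  obtain ⟨T, hTU, hT⟩ := hI.2.exists_le_card_of_maximal hmono hsub h0 hI.1 fun b hb hbI => by
    have := hImax (insert b I) (by
      rw [mem_filter, mem_powerset]
      exact ⟨insert_subset (mem_sdiff.mp hb).1 hI.1, hbI⟩)
    rw [card_insert_of_notMem (mem_sdiff.mp hb).2] at this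
    omega
  refine ⟨⟨I, hI.1, hI.2, le_antisymm (hbound I hI.1 hI.2) ?_⟩, ?_⟩
  · exact (inf'_le _ (mem_powerset.mpr hTU)).trans hT
  · rintro k ⟨J, hJU, hJ, rfl⟩
    exact hbound J hJU hJ

end Submodular

section Matroid

variable {α : Type*} {Ind : Finset α → Prop} {rk : Finset α → ℕ}
  (hrk : ∀ J, IsGreatest {k : ℕ | ∃ I ⊆ J, Ind I ∧ I.card = k} (rk J))
include hrk

lemma card_le_rk {I J : Finset α} (hIJ : I ⊆ J) (hI : Ind I) : I.card ≤ rk J :=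
  (hrk J).2 ⟨I, hIJ, hI, rfl⟩

lemma rk_le_card (J : Finset α) : rk J ≤ J.card := by
  obtain ⟨I, hIJ, -, hI⟩ := (hrk J).1
  exact hI ▸ card_le_card hIJ

lemma rk_empty : rk ∅ = 0 :=
  Nat.eq_zero_of_le_zero (rk_le_card hrk ∅)

lemma indep_of_card_le_rk {J : Finset α} (h : J.card ≤ rk J) : Ind J := by
  obtain ⟨I, hIJ, hI, hcard⟩ := (hrk J).1
  rwa [← eq_of_subset_of_card_le hIJ (by omega)]

lemma rk_mono : Monotone rk := by
  intro J J' hJJ'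
  obtain ⟨I, hIJ, hI, hcard⟩ := (hrk J).1
  exact hcard ▸ card_le_rk hrk (hIJ.trans hJJ') hI

variable [DecidableEq α]

lemma exists_indep_superset_card_eq_rk
    (hexch : ∀ I J, Ind I → Ind J → I.card < J.card → ∃ b ∈ J \ I, Ind (insert b I))
    {A S : Finset α} (hA : Ind A) (hAS : A ⊆ S) :
    ∃ B, A ⊆ B ∧ B ⊆ S ∧ Ind B ∧ B.card = rk S := by
  classical
  obtain ⟨B, hB, hBmax⟩ := exists_max_image (S.powerset.filter fun B => A ⊆ B ∧ Ind B) card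
    ⟨A, by simp [hAS, hA]⟩
  rw [mem_filter, mem_powerset] at hB
  refine ⟨B, hB.2.1, hB.1, hB.2.2, le_antisymm (card_le_rk hrk hB.1 hB.2.2) ?_⟩
  by_contra! hlt
  obtain ⟨W, hWS, hW, hWcard⟩ := (hrk S).1
  obtain ⟨b, hb, hbB⟩ := hexch B W hB.2.2 hW (hWcard ▸ hlt)
  have := hBmax (insert b B) (by
    rw [mem_filter, mem_powerset]
    exact ⟨insert_subset (hWS (mem_sdiff.mp hb).1) hB.1, hB.2.1.trans (subset_insert b B), hbB⟩)
  rw [card_insert_of_notMem (mem_sdiff.mp hb).2] at this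
  omega

lemma rk_submodular (hdown : ∀ I J, I ⊆ J → Ind J → Ind I)
    (hexch : ∀ I J, Ind I → Ind J → I.card < J.card → ∃ b ∈ J \ I, Ind (insert b I)) :
    IsSubmodular rk := by
  intro X Y
  obtain ⟨B₀, hB₀, hB₀i, hB₀card⟩ := (hrk (X ∩ Y)).1
  obtain ⟨B, hB₀B, hB, hBi, hBcard⟩ := exists_indep_superset_card_eq_rk hrk hexch hB₀i
    (hB₀.trans (inter_subset_union))
  have hX := card_le_rk hrk inter_subset_right (hdown _ _ inter_subset_left hBi) (J := X)
  have hY := card_le_rk hrk inter_subset_right (hdown _ _ inter_subset_left hBi) (J := Y)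
  have hunion : B ∩ X ∪ B ∩ Y = B := by rw [← inter_union_distrib_left, inter_eq_left.mpr hB]
  have hinter : B₀ ⊆ B ∩ X ∩ (B ∩ Y) := fun y hy => by grind
  have := card_union_add_card_inter (B ∩ X) (B ∩ Y)
  have := card_le_card hinter
  rw [hunion] at *
  omega

end Matroid

section Cover

variable {ι α : Type*} [Fintype ι] [DecidableEq α] {r : ι → Finset α → ℕ}

def sumRank (r : ι → Finset α → ℕ) (A : ι → Finset α) (J : Finset α) : ℕ :=
  ∑ i, r i (J ∩ A i)

lemma sumRank_mono (hmono : ∀ i, Monotone (r i)) (A : ι → Finset α) : Monotone (sumRank r A) :=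
  fun _ _ hJ => sum_le_sum fun i _ => hmono i (inter_subset_inter_right hJ)

lemma sumRank_submodular (hsub : ∀ i, IsSubmodular (r i)) (A : ι → Finset α) :
    IsSubmodular (sumRank r A) := by
  intro X Y
  simp only [sumRank, ← sum_add_distrib]
  refine sum_le_sum fun i _ => ?_
  rw [union_inter_distrib_right, inter_inter_distrib_right]
  exact hsub i _ _

lemma sumRank_empty (h0 : ∀ i, r i ∅ = 0) (A : ι → Finset α) : sumRank r A ∅ = 0 := by
  simp [sumRank, h0]

/-- Rado's uncrossing step, for `B₁` and `B₂` obtained from `A` by removing `x` from two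
different members. -/
lemma IsSparse.isSparse_sumRank_or (hmono : ∀ i, Monotone (r i)) (hsub : ∀ i, IsSubmodular (r i))
    {A B₁ B₂ : ι → Finset α} {I : Finset α} {x : α} (hI : IsSparse (sumRank r A) I)
    (hB₁ : ∀ k, (A k).erase x ⊆ B₁ k) (hB₂ : ∀ k, (A k).erase x ⊆ B₂ k)
    (hx : ∀ k, x ∈ A k → x ∈ B₁ k ∨ x ∈ B₂ k) :
    IsSparse (sumRank r B₁) I ∨ IsSparse (sumRank r B₂) I := by
  by_contra! h
  simp only [IsSparse, not_forall, not_le] at h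
  obtain ⟨⟨J₁, hJ₁, hJ₁r⟩, ⟨J₂, hJ₂, hJ₂r⟩⟩ := h
  have hxJ : ∀ {B J}, (∀ k, (A k).erase x ⊆ B k) → J ⊆ I → sumRank r B J < J.card → x ∈ J := by
    intro B J hB hJ hJr
    by_contra hxJ
    refine (hJr.trans_le (hI J hJ)).not_ge (sum_le_sum fun k _ => hmono k ?_)
    exact fun y hy => mem_inter.mpr ⟨(mem_inter.mp hy).1, hB k (mem_erase.mpr
      ⟨ne_of_mem_of_not_mem (mem_inter.mp hy).1 hxJ, (mem_inter.mp hy).2⟩)⟩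
  have hx₁ := hxJ hB₁ hJ₁ hJ₁r
  have hx₂ := hxJ hB₂ hJ₂ hJ₂r
  have huncross : sumRank r A (J₁ ∪ J₂) + sumRank r A ((J₁ ∩ J₂).erase x) ≤
      sumRank r B₁ J₁ + sumRank r B₂ J₂ := by
    simp only [sumRank, ← sum_add_distrib]
    refine sum_le_sum fun k _ => (hsub k).add_le_add_of_subset (hmono k) ?_ ?_
    · intro y hy
      have := hB₁ k; have := hB₂ k; have := hx k
      grind
    · intro y hy
      have := hB₁ k; have := hB₂ k
      grind
  have := hI _ (union_subset hJ₁ hJ₂)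
  have := hI ((J₁ ∩ J₂).erase x) ((erase_subset x _).trans (inter_subset_left.trans hJ₁))
  have := card_union_add_card_inter J₁ J₂
  have := card_erase_add_one (mem_inter.mpr ⟨hx₁, hx₂⟩)
  omega

variable {Indep : ι → Finset α → Prop}
  (hr : ∀ i J, IsGreatest {k : ℕ | ∃ I ⊆ J, Indep i I ∧ I.card = k} (r i J))
include hr

lemma IsSparse.exists_biUnion_eq_of_pairwise {A : ι → Finset α} {I : Finset α}
    (hI : IsSparse (sumRank r A) I) (hA : ∀ x ∈ I, ∀ i j, x ∈ A i → x ∈ A j → i = j) :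
    ∃ f : ι → Finset α, (∀ i, Indep i (f i)) ∧ I = univ.biUnion f := by
  refine ⟨fun i => I ∩ A i, fun i => indep_of_card_le_rk (hr i) ?_, ?_⟩
  · have hdisj : ∀ k ≠ i, I ∩ A i ∩ A k = ∅ := fun k hki => by
      ext y
      simp only [mem_inter, notMem_empty, iff_false]
      exact fun ⟨⟨hy, hyi⟩, hyk⟩ => hki (hA y hy k i hyk hyi)
    have := hI (I ∩ A i) inter_subset_left
    rwa [sumRank, sum_eq_single i (fun k _ hki => by rw [hdisj k hki, rk_empty (hr k)])
      (by simp), inter_assoc, inter_self] at this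
  · ext x
    simp only [mem_biUnion, mem_univ, true_and, mem_inter]
    refine ⟨fun hx => ?_, fun ⟨_, hx, _⟩ => hx⟩
    by_contra! h
    have := hI {x} (singleton_subset_iff.mpr hx)
    rw [sumRank, sum_eq_zero fun k _ => by
      rw [singleton_inter_of_notMem (h k hx), rk_empty (hr k)]] at this
    simp at this

lemma IsSparse.exists_biUnion_eq [DecidableEq ι]
    (hdown : ∀ i I J, I ⊆ J → Indep i J → Indep i I)
    (hexch : ∀ i I J, Indep i I → Indep i J → I.card < J.card →
      ∃ b ∈ J \ I, Indep i (insert b I))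
    {A : ι → Finset α} {I : Finset α} (hI : IsSparse (sumRank r A) I) :
    ∃ f : ι → Finset α, (∀ i, Indep i (f i)) ∧ I = univ.biUnion f := by
  induction hn : ∑ i, (A i).card using Nat.strong_induction_on generalizing A with
  | _ n ih =>
  by_cases hA : ∀ x ∈ I, ∀ i j, x ∈ A i → x ∈ A j → i = j
  · exact hI.exists_biUnion_eq_of_pairwise hr hA
  push Not at hA
  obtain ⟨x, -, i, j, hxi, hxj, hij⟩ := hA
  have herase : ∀ k l, (A l).erase x ⊆ Function.update A k ((A k).erase x) l := by
    intro k l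
    rcases eq_or_ne l k with rfl | hlk
    · simp
    · simp [hlk, erase_subset]
  have hlt : ∀ k, x ∈ A k → ∑ l, (Function.update A k ((A k).erase x) l).card < n := by
    intro k hk
    rw [← hn]
    refine sum_lt_sum (fun l _ => card_le_card ?_)
      ⟨k, mem_univ k, by simp [card_erase_lt_of_mem hk]⟩
    rcases eq_or_ne l k with rfl | hlk
    · simp [erase_subset]
    · simp [hlk]
  have hx : ∀ k, x ∈ A k → x ∈ Function.update A i ((A i).erase x) k ∨
      x ∈ Function.update A j ((A j).erase x) k := by
    intro k hk
    rcases eq_or_ne k i with rfl | hki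
    · simp [Function.update_of_ne hij, hk]
    · simp [hki, hk]
  rcases hI.isSparse_sumRank_or (fun k => rk_mono (hr k))
    (fun k => rk_submodular (hr k) (hdown k) (hexch k)) (herase i) (herase j) hx with h | h
  · exact ih _ (hlt i hxi) h rfl
  · exact ih _ (hlt j hxj) h rfl

lemma isSparse_sumRank_biUnion {A : ι → Finset α} (hIA : ∀ i I, Indep i I → I ⊆ A i)
    (hdown : ∀ i I J, I ⊆ J → Indep i J → Indep i I)
    {f : ι → Finset α} (hf : ∀ i, Indep i (f i)) : IsSparse (sumRank r A) (univ.biUnion f) := by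
  intro J hJ
  calc J.card ≤ (univ.biUnion fun i => f i ∩ J).card := card_le_card fun y hy => by
        obtain ⟨i, -, hi⟩ := mem_biUnion.mp (hJ hy)
        exact mem_biUnion.mpr ⟨i, mem_univ i, mem_inter.mpr ⟨hi, hy⟩⟩
    _ ≤ ∑ i, (f i ∩ J).card := card_biUnion_le
    _ ≤ sumRank r A J := sum_le_sum fun i _ =>
        card_le_rk (hr i)
          (subset_inter inter_subset_right (inter_subset_left.trans (hIA i _ (hf i))))
          (hdown i _ _ inter_subset_left (hf i))

end Cover

theorem stmt7_general {α : Type*} [DecidableEq α] {K : ℕ}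
    (E : Fin K → Finset α) (Indep : Fin K → Finset α → Prop)
    (r : Fin K → Finset α → ℕ)
    (hIE : ∀ i I, Indep i I → I ⊆ E i)
    (hdown : ∀ i I J, I ⊆ J → Indep i J → Indep i I)
    (hexch : ∀ i I J, Indep i I → Indep i J → I.card < J.card →
      ∃ b ∈ J \ I, Indep i (insert b I))
    (hr : ∀ i J, IsGreatest {k : ℕ | ∃ I ⊆ J, Indep i I ∧ I.card = k} (r i J)) :
    (UnionIndep Indep ∅ ∧
     (∀ I J : Finset α, I ⊆ J → UnionIndep Indep J → UnionIndep Indep I) ∧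
     (∀ I J : Finset α, UnionIndep Indep I → UnionIndep Indep J → I.card < J.card →
        ∃ b ∈ J \ I, UnionIndep Indep (insert b I))) ∧
    ∀ U ⊆ Finset.univ.biUnion E,
      IsGreatest {k : ℕ | ∃ I ⊆ U, UnionIndep Indep I ∧ I.card = k}
        (U.powerset.inf' (Finset.powerset_nonempty U)
          (fun T => (U \ T).card + ∑ i, r i (T ∩ E i))) := by
  have hsparse : ∀ I, UnionIndep Indep I ↔ IsSparse (sumRank r E) I := fun I =>
    ⟨fun ⟨f, hf, hI⟩ => hI ▸ isSparse_sumRank_biUnion hr hIE hdown hf,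
      fun hI => hI.exists_biUnion_eq hr hdown hexch⟩
  have hmono := sumRank_mono (fun i => rk_mono (hr i)) E
  have hsub := sumRank_submodular (fun i => rk_submodular (hr i) (hdown i) (hexch i)) E
  have h0 := sumRank_empty (fun i => rk_empty (hr i)) E
  simp only [hsparse]
  exact ⟨⟨isSparse_empty, fun I J hIJ hJ => hJ.mono hIJ,
    fun I J hI hJ => hI.exists_insert_of_card_lt hmono hsub h0 hJ⟩,
    fun U _ => isGreatest_card_isSparse hmono hsub h0 U⟩

theorem stmt7 {α : Type*} [DecidableEq α] [Fintype α] {K : ℕ}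
    (E : Fin K → Finset α) (Indep : Fin K → Finset α → Prop)
    (r : Fin K → Finset α → ℕ)
    (hIE : ∀ i I, Indep i I → I ⊆ E i)
    (hempty : ∀ i, Indep i ∅)
    (hdown : ∀ i I J, I ⊆ J → Indep i J → Indep i I)
    (hexch : ∀ i I J, Indep i I → Indep i J → I.card < J.card →
      ∃ b ∈ J \ I, Indep i (insert b I))
    (hr : ∀ i J, IsGreatest {k : ℕ | ∃ I ⊆ J, Indep i I ∧ I.card = k} (r i J)) :
    (UnionIndep Indep ∅ ∧
     (∀ I J : Finset α, I ⊆ J → UnionIndep Indep J → UnionIndep Indep I) ∧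
     (∀ I J : Finset α, UnionIndep Indep I → UnionIndep Indep J → I.card < J.card →
        ∃ b ∈ J \ I, UnionIndep Indep (insert b I))) ∧
    ∀ U ⊆ Finset.univ.biUnion E,
      IsGreatest {k : ℕ | ∃ I ⊆ U, UnionIndep Indep I ∧ I.card = k}
        (U.powerset.inf' (Finset.powerset_nonempty U)
          (fun T => (U \ T).card + ∑ i, r i (T ∩ E i))) :=
  stmt7_general E Indep r hIE hdown hexch hr
end
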